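/- Let $(\Omega, \mathcal{A}, \mathbb{P})$ be a probability space and let $E = \mathbb{R}^n$ with its Euclidean inner product. Let $y : \Omega \to E$ be a random vector, $f : E \to E$ a measurable map with $f \circ y$ square-integrable, let $p, \varepsilon \in E$ be constants, and let $\eta : \Omega \to E$ be a square-integrable random vector independent of $y$ with $\mathbb{E}[\eta] = 0$. Define the second noisy observation $z = p + \varepsilon + \eta$. Then $\mathbb{E}\|f(y) - p\|^2 = \mathbb{E}\|f(y) - z\|^2 - \mathbb{E}\|\eta\|^2 - \|\varepsilon\|^2 + 2\,\langle \varepsilon,\; \mathbb{E}[f(y) - p] \rangle$. In particular, when $\varepsilon = 0$ the self-supervised objective $\mathbb{E}\|f(y) - z\|^2$ differs from the supervised objective $\mathbb{E}\|f(y) - p\|^2$ only by the constant $\mathbb{E}\|\eta\|^2$. -/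

import Mathlib

/-!
Write `f(y) - z = (f(y) - p - ε) - η`. Since `η` is centred and independent of `y`, it is
orthogonal in `L²` to every square-integrable function of `y`, so the expected squared norm
splits as `E‖f(y) - p - ε‖² + E‖η‖²`; expanding the first term around the constant `ε` gives
the remaining `‖ε‖² - 2⟪ε, E[f(y) - p]⟫`.
-/

open MeasureTheory ProbabilityTheory
open scoped RealInnerProductSpace

section

variable {Ω E : Type*} {mΩ : MeasurableSpace Ω} {μ : Measure Ω}
  [NormedAddCommGroup E] [InnerProductSpace ℝ E] [CompleteSpace E]

theorem ProbabilityTheory.IndepFun.integral_inner [MeasurableSpace E] [BorelSpace E]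
    {X Y : Ω → E} (hXY : IndepFun X Y μ) (hX : Integrable X μ) (hY : Integrable Y μ) :
    ∫ ω, ⟪X ω, Y ω⟫ ∂μ = ⟪μ[X], μ[Y]⟫ :=
  hXY.integral_bilin hX hY (innerSL ℝ)

theorem integral_norm_sub_sq_of_indepFun [MeasurableSpace E] [BorelSpace E] [IsFiniteMeasure μ]
    {X Y : Ω → E} (hXY : IndepFun X Y μ) (hX : MemLp X 2 μ) (hY : MemLp Y 2 μ)
    (hY0 : μ[Y] = 0) :
    ∫ ω, ‖X ω - Y ω‖ ^ 2 ∂μ = ∫ ω, ‖X ω‖ ^ 2 ∂μ + ∫ ω, ‖Y ω‖ ^ 2 ∂μ := by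
  have hX1 := hX.integrable one_le_two
  have hY1 := hY.integrable one_le_two
  have hXY1 : Integrable (fun ω ↦ ⟪X ω, Y ω⟫) μ := hXY.integrable_bilin hX1 hY1 (innerSL ℝ)
  have hcross : Integrable (fun ω ↦ ‖X ω‖ ^ 2 - 2 * ⟪X ω, Y ω⟫) μ :=
    hX.norm.integrable_sq.sub (hXY1.const_mul 2)
  simp only [norm_sub_sq_real]
  rw [integral_add hcross hY.norm.integrable_sq,
    integral_sub hX.norm.integrable_sq (hXY1.const_mul 2), integral_const_mul,
    hXY.integral_inner hX1 hY1, hY0, inner_zero_right, mul_zero, sub_zero]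

theorem integral_norm_sub_const_sq [IsProbabilityMeasure μ] {X : Ω → E} (hX : MemLp X 2 μ)
    (c : E) :
    ∫ ω, ‖X ω - c‖ ^ 2 ∂μ = ∫ ω, ‖X ω‖ ^ 2 ∂μ - 2 * ⟪c, μ[X]⟫ + ‖c‖ ^ 2 := by
  have hX1 := hX.integrable one_le_two
  have hXc : Integrable (fun ω ↦ ⟪X ω, c⟫) μ := hX1.inner_const c
  have hXc_mean : ∫ ω, ⟪X ω, c⟫ ∂μ = ⟪c, μ[X]⟫ := by
    simp_rw [real_inner_comm c]
    exact integral_inner hX1 c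
  have hcross : Integrable (fun ω ↦ ‖X ω‖ ^ 2 - 2 * ⟪X ω, c⟫) μ :=
    hX.norm.integrable_sq.sub (hXc.const_mul 2)
  simp only [norm_sub_sq_real]
  rw [integral_add hcross (integrable_const _),
    integral_sub hX.norm.integrable_sq (hXc.const_mul 2), integral_const_mul,
    hXc_mean, integral_const, probReal_univ, one_smul]

end

theorem frequencyCT_self_supervised_identity_general
    {Ω : Type*} [MeasureSpace Ω] [IsProbabilityMeasure (ℙ : Measure Ω)]
    (n : ℕ)
    (y : Ω → EuclideanSpace ℝ (Fin n))
    (f : EuclideanSpace ℝ (Fin n) → EuclideanSpace ℝ (Fin n)) (hf : Measurable f)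
    (hfy : MemLp (fun ω => f (y ω)) 2 ℙ)
    (p ε : EuclideanSpace ℝ (Fin n))
    (η : Ω → EuclideanSpace ℝ (Fin n))
    (hη2 : MemLp η 2 ℙ) (hηmean : ∫ ω, η ω ∂ℙ = 0)
    (hindep : IndepFun η y ℙ)
    (z : Ω → EuclideanSpace ℝ (Fin n)) (hz : ∀ ω, z ω = p + ε + η ω) :
    (∫ ω, ‖f (y ω) - p‖ ^ 2 ∂ℙ) =
      (∫ ω, ‖f (y ω) - z ω‖ ^ 2 ∂ℙ) - (∫ ω, ‖η ω‖ ^ 2 ∂ℙ) - ‖ε‖ ^ 2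
        + 2 * ⟪ε, ∫ ω, (f (y ω) - p) ∂ℙ⟫ ∧
    (ε = 0 → (∫ ω, ‖f (y ω) - z ω‖ ^ 2 ∂ℙ) =
      (∫ ω, ‖f (y ω) - p‖ ^ 2 ∂ℙ) + (∫ ω, ‖η ω‖ ^ 2 ∂ℙ)) := by
  have hfyp : MemLp (fun ω ↦ f (y ω) - p) 2 ℙ := hfy.sub (memLp_const p)
  have hresid_indep : IndepFun (fun ω ↦ f (y ω) - p - ε) η ℙ :=
    hindep.symm.comp ((hf.sub_const p).sub_const ε) measurable_id
  have hsplit : ∀ ω, f (y ω) - z ω = f (y ω) - p - ε - η ω := fun ω ↦ by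
    rw [hz]; abel
  have hexpand : ∫ ω, ‖f (y ω) - z ω‖ ^ 2 ∂ℙ =
      ∫ ω, ‖f (y ω) - p‖ ^ 2 ∂ℙ - 2 * ⟪ε, ∫ ω, (f (y ω) - p) ∂ℙ⟫ + ‖ε‖ ^ 2
        + ∫ ω, ‖η ω‖ ^ 2 ∂ℙ := by
    simp only [hsplit]
    rw [integral_norm_sub_sq_of_indepFun hresid_indep (hfyp.sub (memLp_const ε)) hη2 hηmean,
      integral_norm_sub_const_sq hfyp ε]
  refine ⟨by linarith, fun hε ↦ ?_⟩
  simpa [hε] using hexpand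

/-- The self-supervised training identity (Eq. 17, Neighbor2Neighbor):
for a noisy observation `y`, clean target `p`, and second noisy observation
`z = p + ε + η` with `η` zero-mean, square-integrable, and independent of `y`,
`E‖f(y) - p‖² = E‖f(y) - z‖² - E‖η‖² - ‖ε‖² + 2⟨ε, E[f(y) - p]⟩`.
In particular, when `ε = 0`, the self-supervised objective differs from the
supervised one only by the constant `E‖η‖²`. -/
theorem frequencyCT_self_supervised_identity
    {Ω : Type*} [MeasureSpace Ω] [IsProbabilityMeasure (ℙ : Measure Ω)]
    (n : ℕ)
    (y : Ω → EuclideanSpace ℝ (Fin n)) (hy : Measurable y)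
    (f : EuclideanSpace ℝ (Fin n) → EuclideanSpace ℝ (Fin n)) (hf : Measurable f)
    (hfy : MemLp (fun ω => f (y ω)) 2 ℙ)
    (p ε : EuclideanSpace ℝ (Fin n))
    (η : Ω → EuclideanSpace ℝ (Fin n)) (hη : Measurable η)
    (hη2 : MemLp η 2 ℙ) (hηmean : ∫ ω, η ω ∂ℙ = 0)
    (hindep : IndepFun η y ℙ)
    (z : Ω → EuclideanSpace ℝ (Fin n)) (hz : ∀ ω, z ω = p + ε + η ω) :
    (∫ ω, ‖f (y ω) - p‖ ^ 2 ∂ℙ) =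
      (∫ ω, ‖f (y ω) - z ω‖ ^ 2 ∂ℙ) - (∫ ω, ‖η ω‖ ^ 2 ∂ℙ) - ‖ε‖ ^ 2
        + 2 * ⟪ε, ∫ ω, (f (y ω) - p) ∂ℙ⟫ ∧
    (ε = 0 → (∫ ω, ‖f (y ω) - z ω‖ ^ 2 ∂ℙ) =
      (∫ ω, ‖f (y ω) - p‖ ^ 2 ∂ℙ) + (∫ ω, ‖η ω‖ ^ 2 ∂ℙ)) :=
  frequencyCT_self_supervised_identity_general n y f hf hfy p ε η hη2 hηmean hindep z hz
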